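/- Let $(P_K)$ satisfy $P_K = \sum_{j=0}^K \pi_j P_{K-j+1}$, $P_0 = 1$, where $(\pi_j)$ is a probability distribution with $\pi_0 > 0$, mean $1$, and positive finite second factorial moment $\varrho_2$. Let $\zeta(N)$ be random variables with $\zeta(N)\to\infty$ a.s., $\zeta(N) \le c N$ for a constant $c$, and suppose $\mathbf{E}\zeta(N)/N$ converges. Then $\lim_{N\to\infty} \frac{\mathbf{E}[P_{\zeta(N)}]}{\mathbf{E}\zeta(N)} = \frac{2}{\varrho_2}$. -/

import Mathlib

/-!
Let `g = tail π` and `h = tail g`, where `tail a n = ∑_{j > n} a j`. By the layer-cake formula,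
`∑ g = ∑ j π j = 1` and `∑ h = ∑ n g n = ϱ₂ / 2`. Write `Π, G, H, P, P₊` for the generating series
of `π, g, h, P` and `n ↦ P (n + 1)`. The recurrence says `Π P₊ = P`; with `P = 1 + X P₊`,
`G = (1 - Π) / (1 - X)` and `H = (1 - G) / (1 - X)` this gives `H P₊ = (1 - X)⁻²`, i.e.
`∑_{k ≤ n} h k P (n - k + 1) = n + 1`, and shows that `Y = (1 - X) P` solves the renewal equation
`Y = Π + G Y`; since `g 0 = 1 - π 0 < 1`, the coefficients `P n - P (n - 1)` of `Y` are nonnegative.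
A monotone solution of that convolution identity grows like `n / ∑ h` (elementary renewal theorem),
so `P K / K → 2 / ϱ₂`. Hence `|P K - 2 K / ϱ₂| ≤ ε K + C_ε`, and averaging this over `K = ζ N`
gives the limit, because `𝔼 ζ N → ∞` by dominated convergence.
-/

open Filter Topology MeasureTheory ProbabilityTheory
open Finset hiding mk

/-- `tail a n = ∑_{j > n} a j` when `a` has total mass `1`. -/
noncomputable def tail (a : ℕ → ℝ) (n : ℕ) : ℝ := 1 - ∑ j ∈ range (n + 1), a j

section Tail

variable {a : ℕ → ℝ}

theorem tail_nonneg (ha : ∀ j, 0 ≤ a j) (h : HasSum a 1) (n : ℕ) : 0 ≤ tail a n :=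
  sub_nonneg.2 (sum_le_hasSum _ (fun j _ => ha j) h)

theorem hasSum_ite_lt (h : HasSum a 1) (n : ℕ) :
    HasSum (fun j => if n < j then a j else 0) (tail a n) := by
  refine (hasSum_nat_add_iff' (n + 1)).1 ?_
  have hzero : ∑ j ∈ range (n + 1), (if n < j then a j else 0) = 0 :=
    sum_eq_zero fun j hj => if_neg (by simpa [Nat.lt_succ_iff] using hj)
  simpa [hzero, tail, show ∀ j, n < j + (n + 1) by omega] using (hasSum_nat_add_iff' (n + 1)).2 h

theorem hasSum_mul_tail {b : ℕ → ℝ} (ha : ∀ j, 0 ≤ a j) (hb : ∀ m, 0 ≤ b m) (h : HasSum a 1)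
    (hs : Summable fun j => (∑ m ∈ range j, b m) * a j) :
    HasSum (fun m => b m * tail a m) (∑' j, (∑ m ∈ range j, b m) * a j) := by
  set F : ℕ × ℕ → ℝ := fun p => if p.2 < p.1 then b p.2 * a p.1 else 0
  have hF : 0 ≤ F := fun p => by
    dsimp only [F]; split_ifs; exacts [mul_nonneg (hb _) (ha _), le_rfl]
  have hrow : ∀ j, HasSum (fun m => F (j, m)) ((∑ m ∈ range j, b m) * a j) := fun j => by
    rw [sum_mul]
    have hfin : HasSum (fun m => F (j, m)) (∑ m ∈ range j, F (j, m)) :=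
      hasSum_sum_of_ne_finset_zero fun m hm => if_neg (by simpa using hm)
    rwa [sum_congr rfl fun m hm => if_pos (mem_range.1 hm)] at hfin
  have hcol : ∀ m, HasSum (fun j => F (j, m)) (b m * tail a m) := fun m => by
    simpa only [F, mul_ite, mul_zero] using (hasSum_ite_lt h m).mul_left (b m)
  have hFs : Summable F := (summable_prod_of_nonneg hF).2
    ⟨fun j => (hrow j).summable, hs.congr fun j => (hrow j).tsum_eq.symm⟩
  have hFsum : ∑' p, F p = ∑' j, (∑ m ∈ range j, b m) * a j :=
    (hFs.hasSum.prod_fiberwise hrow).unique hs.hasSum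
  rw [← hFsum]
  exact (((Equiv.prodComm ℕ ℕ).hasSum_iff).2 hFs.hasSum).prod_fiberwise hcol

theorem hasSum_tail {μ : ℝ} (ha : ∀ j, 0 ≤ a j) (h : HasSum a 1)
    (hμ : HasSum (fun j : ℕ => (j : ℝ) * a j) μ) : HasSum (tail a) μ := by
  have hs : ∀ j : ℕ, (∑ _m ∈ range j, (1 : ℝ)) * a j = j * a j := fun j => by simp
  simpa [hs, hμ.tsum_eq] using
    hasSum_mul_tail ha (fun _ => zero_le_one) h (hμ.summable.congr fun j => (hs j).symm)

theorem hasSum_natCast_mul_tail {ρ : ℝ} (ha : ∀ j, 0 ≤ a j) (h : HasSum a 1)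
    (hρ : HasSum (fun j : ℕ => (j : ℝ) * (j - 1) * a j) ρ) :
    HasSum (fun m : ℕ => (m : ℝ) * tail a m) (ρ / 2) := by
  have hgauss : ∀ j : ℕ, ∑ m ∈ range j, (m : ℝ) = j * (j - 1) / 2 := fun j => by
    induction j with
    | zero => simp
    | succ j ih => rw [sum_range_succ, ih]; push_cast; ring
  have hs : ∀ j : ℕ, (∑ m ∈ range j, (m : ℝ)) * a j = (j : ℝ) * (j - 1) * a j / 2 := fun j => by
    rw [hgauss]; ring
  simpa [hs, tsum_div_const, hρ.tsum_eq] using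
    hasSum_mul_tail ha Nat.cast_nonneg h ((hρ.div_const 2).summable.congr fun j => (hs j).symm)

end Tail

namespace PowerSeries

theorem coeff_mk_mul_mk {R : Type*} [Semiring R] (a b : ℕ → R) (n : ℕ) :
    coeff n (mk a * mk b) = ∑ k ∈ range (n + 1), a k * b (n - k) := by
  simp [coeff_mul, Finset.Nat.sum_antidiagonal_eq_sum_range_succ_mk]

theorem coeff_nonneg_of_eq_add_mul {R : Type*} [CommRing R] [LinearOrder R]
    [IsStrictOrderedRing R] {B W Y : R⟦X⟧} (hB : ∀ n, 0 ≤ coeff n B) (hW : ∀ n, 0 ≤ coeff n W)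
    (hW0 : coeff 0 W < 1) (hY : Y = B + W * Y) (n : ℕ) : 0 ≤ coeff n Y := by
  induction n using Nat.strong_induction_on with
  | _ n ih =>
    set rest := ∑ p ∈ (antidiagonal n).erase (0, n), coeff p.1 W * coeff p.2 Y
    have hrest : 0 ≤ rest := sum_nonneg fun p hp => by
      obtain ⟨hne, hmem⟩ := mem_erase.1 hp
      rw [HasAntidiagonal.mem_antidiagonal] at hmem
      refine mul_nonneg (hW _) (ih _ ?_)
      by_contra! hle
      exact hne (Prod.ext (by simp; omega) (by simp; omega))
    have hcoeff : coeff n Y = coeff n B + (coeff 0 W * coeff n Y + rest) := by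
      conv_lhs => rw [hY]
      rw [map_add, coeff_mul, ← add_sum_erase _ _ (by simp : ((0, n) : ℕ × ℕ) ∈ antidiagonal n)]
    have : 0 ≤ (1 - coeff 0 W) * coeff n Y := by rw [sub_mul, one_mul]; linarith [hB n]
    exact nonneg_of_mul_nonneg_right this (sub_pos.2 hW0)

end PowerSeries

open PowerSeries

theorem mk_tail (a : ℕ → ℝ) : mk (tail a) = (1 - mk a) * mk 1 := by
  refine PowerSeries.ext fun n => ?_; simp [tail, sub_mul, coeff_mk_mul_mk]

section Takacs

variable {π P : ℕ → ℝ}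

theorem mk_mul_mk_succ_of_rec (hrec : ∀ K, P K = ∑ j ∈ range (K + 1), π j * P (K - j + 1)) :
    mk π * mk (fun n => P (n + 1)) = mk P := by
  refine PowerSeries.ext fun K => ?_; rw [coeff_mk_mul_mk, coeff_mk, hrec]

theorem mk_eq_one_add_X_mul_mk_succ (hP0 : P 0 = 1) : mk P = 1 + X * mk (fun n => P (n + 1)) := by
  refine PowerSeries.ext fun n => ?_; cases n <;> simp [hP0, coeff_succ_X_mul, coeff_one]

variable (hP0 : P 0 = 1) (hrec : ∀ K, P K = ∑ j ∈ range (K + 1), π j * P (K - j + 1))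
include hP0 hrec

theorem sum_tail_tail_mul_eq (n : ℕ) :
    ∑ k ∈ range (n + 1), tail (tail π) k * P (n - k + 1) = n + 1 := by
  have key : mk (tail (tail π)) * mk (fun n => P (n + 1)) = mk 1 * mk 1 := by
    rw [mk_tail, mk_tail]
    linear_combination (mk 1 * mk 1) * mk_mul_mk_succ_of_rec hrec
      + (mk 1 * mk 1) * mk_eq_one_add_X_mul_mk_succ hP0
      - (mk 1 * mk (fun n => P (n + 1))) * mk_one_mul_one_sub_eq_one ℝ
  simpa [coeff_mk_mul_mk] using congrArg (coeff n) key

theorem monotone_of_rec (hπ : ∀ j, 0 ≤ π j) (hπ1 : HasSum π 1) (hπ0 : 0 < π 0) : Monotone P := by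
  have hY : (1 - X) * mk P = mk π + mk (tail π) * ((1 - X) * mk P) := by
    rw [mk_tail]
    linear_combination (-(1 - mk π) * mk P) * mk_one_mul_one_sub_eq_one ℝ
      + X * mk_mul_mk_succ_of_rec hrec + mk π * mk_eq_one_add_X_mul_mk_succ hP0
  have hnonneg := coeff_nonneg_of_eq_add_mul (by simpa using hπ)
    (by simpa using tail_nonneg hπ hπ1) (by simpa [tail] using hπ0) hY
  refine monotone_nat_of_le_succ fun n => ?_
  simpa [sub_mul, coeff_succ_X_mul] using hnonneg (n + 1)

end Takacs

section RenewalTheorem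

variable {T U : ℕ → ℝ} (hT : ∀ k, 0 ≤ T k) (hU : Monotone U)
  (hconv : ∀ n, ∑ k ∈ range (n + 1), T k * U (n - k + 1) = n + 1)
include hT hU hconv

theorem nonneg_of_sum_mul_eq (n : ℕ) : 0 ≤ U (n + 1) := by
  have h0 : T 0 * U 1 = 1 := by simpa using hconv 0
  exact (pos_of_mul_pos_right (h0 ▸ one_pos) (hT 0)).le.trans (hU (by omega))

theorem succ_le_mul_of_sum_mul_eq {μ : ℝ} (hTμ : HasSum T μ) (n : ℕ) :
    (n + 1 : ℝ) ≤ μ * U (n + 1) := calc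
  (n + 1 : ℝ) = ∑ k ∈ range (n + 1), T k * U (n - k + 1) := (hconv n).symm
  _ ≤ ∑ k ∈ range (n + 1), T k * U (n + 1) :=
    sum_le_sum fun k _ => mul_le_mul_of_nonneg_left (hU (by omega)) (hT k)
  _ ≤ μ * U (n + 1) := by
    rw [← sum_mul]
    exact mul_le_mul_of_nonneg_right (sum_le_hasSum _ (fun k _ => hT k) hTμ)
      (nonneg_of_sum_mul_eq hT hU hconv n)

theorem sum_range_mul_le_of_sum_mul_eq (L m : ℕ) :
    (∑ k ∈ range (L + 1), T k) * U (m + 1) ≤ m + L + 1 := calc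
  (∑ k ∈ range (L + 1), T k) * U (m + 1) ≤ ∑ k ∈ range (L + 1), T k * U (m + L - k + 1) := by
    rw [sum_mul]
    exact sum_le_sum fun k hk => mul_le_mul_of_nonneg_left (hU (by simp at hk; omega)) (hT k)
  _ ≤ ∑ k ∈ range (m + L + 1), T k * U (m + L - k + 1) :=
    sum_le_sum_of_subset_of_nonneg (range_subset_range.2 (by omega))
      fun k _ _ => mul_nonneg (hT k) (nonneg_of_sum_mul_eq hT hU hconv _)
  _ = m + L + 1 := by rw [hconv]; push_cast; ring

theorem tendsto_div_of_sum_mul_eq {μ : ℝ} (hTμ : HasSum T μ) :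
    Tendsto (fun n : ℕ => U n / n) atTop (𝓝 μ⁻¹) := by
  have lower := succ_le_mul_of_sum_mul_eq hT hU hconv hTμ
  have hμ : 0 < μ := pos_of_mul_pos_left (one_pos.trans_le (by simpa using lower 0))
    (nonneg_of_sum_mul_eq hT hU hconv 0)
  refine (tendsto_add_atTop_iff_nat 1).1 (tendsto_order.2 ⟨fun a ha => ?_, fun b hb => ?_⟩)
  · refine Eventually.of_forall fun n => ha.trans_le ?_
    rw [Nat.cast_succ, le_div_iff₀ (by positivity), inv_mul_le_iff₀ hμ]
    exact lower n
  · have hH : Tendsto (fun L => ∑ k ∈ range (L + 1), T k) atTop (𝓝 μ) :=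
      (tendsto_add_atTop_iff_nat 1).2 hTμ.tendsto_sum_nat
    obtain ⟨L, hHb, hHpos⟩ := ((hH.inv₀ hμ.ne').eventually (gt_mem_nhds hb)).and
      (hH.eventually (lt_mem_nhds hμ)) |>.exists
    set H := ∑ k ∈ range (L + 1), T k
    have hsmall : Tendsto (fun n : ℕ => (L : ℝ) / H / (n + 1)) atTop (𝓝 0) :=
      tendsto_const_div_atTop_nhds_zero_nat ((L : ℝ) / H) |>.comp (tendsto_add_atTop_nat 1)
        |>.congr fun n => by simp
    filter_upwards [hsmall.eventually (gt_mem_nhds (sub_pos.2 hHb))] with n hn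
    calc U (n + 1 : ℕ) / (n + 1 : ℕ) ≤ H⁻¹ + L / H / (n + 1) := by
          rw [Nat.cast_succ, div_le_iff₀ (by positivity),
            show (H⁻¹ + L / H / (n + 1)) * (n + 1) = (n + L + 1) / H by field_simp; ring,
            le_div_iff₀ hHpos, mul_comm]
          exact sum_range_mul_le_of_sum_mul_eq hT hU hconv L n
      _ < b := by linarith

end RenewalTheorem

theorem exists_abs_sub_mul_le_of_tendsto_div {f : ℕ → ℝ} {l : ℝ}
    (hf : Tendsto (fun K : ℕ => f K / K) atTop (𝓝 l)) {ε : ℝ} (hε : 0 < ε) :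
    ∃ C, ∀ K : ℕ, |f K - l * K| ≤ ε * K + C := by
  obtain ⟨K₀, hK₀⟩ := Metric.tendsto_atTop.1 hf ε hε
  refine ⟨∑ k ∈ range (K₀ + 1), |f k - l * k|, fun K => ?_⟩
  rcases le_or_gt K K₀ with hK | hK
  · have := single_le_sum (f := fun k : ℕ => |f k - l * k|) (fun k _ => abs_nonneg _)
      (mem_range.2 (Nat.lt_succ_of_le hK))
    have : 0 ≤ ε * K := by positivity
    linarith
  · have hKpos : (0 : ℝ) < K := by exact_mod_cast (Nat.zero_le K₀).trans_lt hK
    have hdist := hK₀ K hK.le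
    rw [Real.dist_eq] at hdist
    have : |f K - l * K| ≤ ε * K := by
      rw [show f K - l * K = (f K / K - l) * K by field_simp, abs_mul, abs_of_pos hKpos]
      exact mul_le_mul_of_nonneg_right hdist.le hKpos.le
    have : 0 ≤ ∑ k ∈ range (K₀ + 1), |f k - l * k| := sum_nonneg fun k _ => abs_nonneg _
    linarith

section Averaging

variable {Ω : Type*} [MeasurableSpace Ω] {μ : Measure Ω}

theorem tendsto_integral_atTop_of_ae_tendsto_atTop [IsProbabilityMeasure μ] {X : ℕ → Ω → ℝ}
    (hX : ∀ n, Integrable (X n) μ) (hX0 : ∀ n, 0 ≤ᵐ[μ] X n)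
    (h : ∀ᵐ ω ∂μ, Tendsto (fun n => X n ω) atTop atTop) :
    Tendsto (fun n => ∫ ω, X n ω ∂μ) atTop atTop := by
  refine tendsto_atTop.2 fun b => ?_
  set B := |b| + 1
  have hB : 0 ≤ B := by positivity
  have hmin : Tendsto (fun n => ∫ ω, min (X n ω) B ∂μ) atTop (𝓝 B) := by
    have := tendsto_integral_of_dominated_convergence (μ := μ) (F := fun n ω => min (X n ω) B)
      (fun _ => B)
      (fun n => ((hX n).inf (integrable_const B)).aestronglyMeasurable) (integrable_const B)
      (fun n => (hX0 n).mono fun ω hω => by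
        rw [Real.norm_eq_abs, abs_of_nonneg (le_min hω hB)]; exact min_le_right _ _)
      (h.mono fun ω hω => tendsto_const_nhds.congr'
        ((hω.eventually_ge_atTop B).mono fun n hn => (min_eq_right hn).symm))
    simpa using this
  filter_upwards [hmin.eventually (lt_mem_nhds (show b < B by linarith [le_abs_self b]))] with n hn
  exact hn.le.trans
    (integral_mono ((hX n).inf (integrable_const B)) (hX n) fun ω => min_le_left _ _)

theorem abs_integral_comp_sub_mul_le [IsFiniteMeasure μ] {f : ℕ → ℝ} {l ε C : ℝ}
    (hfC : ∀ K : ℕ, |f K - l * K| ≤ ε * K + C) {X : Ω → ℕ} (hX : Measurable X)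
    (hXi : Integrable (fun ω => (X ω : ℝ)) μ) :
    |(∫ ω, f (X ω) ∂μ) - l * ∫ ω, (X ω : ℝ) ∂μ|
      ≤ ε * (∫ ω, (X ω : ℝ) ∂μ) + μ.real Set.univ * C := by
  have hdom : Integrable (fun ω => ε * (X ω : ℝ) + C) μ :=
    (hXi.const_mul _).add (integrable_const C)
  have hdiff : Integrable (fun ω => f (X ω) - l * X ω) μ :=
    hdom.mono' ((measurable_from_top (f := fun K : ℕ => f K - l * K)).comp hX).aestronglyMeasurable
      (ae_of_all _ fun ω => hfC _)
  have hfX : Integrable (fun ω => f (X ω)) μ :=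
    (hdiff.add (hXi.const_mul l)).congr (ae_of_all _ fun ω => by simp)
  rw [← integral_const_mul, ← integral_sub hfX (hXi.const_mul l)]
  calc |∫ ω, f (X ω) - l * X ω ∂μ| ≤ ∫ ω, |f (X ω) - l * X ω| ∂μ := abs_integral_le_integral_abs
    _ ≤ ∫ ω, ε * (X ω : ℝ) + C ∂μ := integral_mono hdiff.abs hdom fun ω => hfC _
    _ = ε * (∫ ω, (X ω : ℝ) ∂μ) + μ.real Set.univ * C := by
        rw [integral_add (hXi.const_mul _) (integrable_const C), integral_const_mul,
          integral_const, smul_eq_mul]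

theorem tendsto_integral_comp_div_integral [IsFiniteMeasure μ] {ι : Type*} {F : Filter ι}
    {f : ℕ → ℝ} {l : ℝ} (hf : Tendsto (fun K : ℕ => f K / K) atTop (𝓝 l)) {X : ι → Ω → ℕ}
    (hX : ∀ i, Measurable (X i)) (hXi : ∀ i, Integrable (fun ω => (X i ω : ℝ)) μ)
    (hEX : Tendsto (fun i => ∫ ω, (X i ω : ℝ) ∂μ) F atTop) :
    Tendsto (fun i => (∫ ω, f (X i ω) ∂μ) / ∫ ω, (X i ω : ℝ) ∂μ) F (𝓝 l) := by
  refine Metric.tendsto_nhds.2 fun ε hε => ?_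
  obtain ⟨C, hC⟩ := exists_abs_sub_mul_le_of_tendsto_div hf (half_pos hε)
  have hC' : Tendsto (fun i => μ.real Set.univ * C / ∫ ω, (X i ω : ℝ) ∂μ) F (𝓝 0) :=
    tendsto_const_nhds.div_atTop hEX
  filter_upwards [hEX.eventually_gt_atTop 0, hC'.eventually (gt_mem_nhds (half_pos hε))]
    with i hpos hsmall
  have hbound := abs_integral_comp_sub_mul_le hC (hX i) (hXi i)
  rw [div_lt_iff₀ hpos] at hsmall
  rw [Real.dist_eq, show (∫ ω, f (X i ω) ∂μ) / (∫ ω, (X i ω : ℝ) ∂μ) - l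
      = ((∫ ω, f (X i ω) ∂μ) - l * ∫ ω, (X i ω : ℝ) ∂μ) / ∫ ω, (X i ω : ℝ) ∂μ by field_simp,
    abs_div, abs_of_pos hpos, div_lt_iff₀ hpos]
  linarith

end Averaging

theorem stmt12_general (π P : ℕ → ℝ)
    (hπ_nonneg : ∀ j, 0 ≤ π j) (hπ_sum : ∑' j, π j = 1) (hπ0 : 0 < π 0)
    (hmean_summable : Summable (fun j : ℕ => (j : ℝ) * π j))
    (hmean : ∑' j : ℕ, (j : ℝ) * π j = 1)
    (hsec_summable : Summable (fun j : ℕ => (j : ℝ) * ((j : ℝ) - 1) * π j))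
    (hP0 : P 0 = 1)
    (hrec : ∀ K, P K = ∑ j ∈ Finset.range (K + 1), π j * P (K - j + 1))
    (Ω : Type*) [MeasureSpace Ω] [IsProbabilityMeasure (ℙ : Measure Ω)]
    (ζ : ℕ → Ω → ℕ) (hζ_meas : ∀ N, Measurable (ζ N))
    (hζ_tendsto : ∀ᵐ ω, Tendsto (fun N => ζ N ω) atTop atTop)
    (c : ℝ) (hζ_bdd : ∀ N ω, (ζ N ω : ℝ) ≤ c * N) :
    Tendsto (fun N => (∫ ω, P (ζ N ω)) / ∫ ω, (ζ N ω : ℝ)) atTop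
      (nhds (2 / ∑' j : ℕ, (j : ℝ) * ((j : ℝ) - 1) * π j)) := by
  have hπ : HasSum π 1 := by
    refine hπ_sum ▸ (Summable.hasSum ?_)
    by_contra h
    simp [tsum_eq_zero_of_not_summable h] at hπ_sum
  have hg : HasSum (tail π) 1 := hasSum_tail hπ_nonneg hπ (hmean ▸ hmean_summable.hasSum)
  have hh := hasSum_tail (tail_nonneg hπ_nonneg hπ) hg
    (hasSum_natCast_mul_tail hπ_nonneg hπ hsec_summable.hasSum)
  have hP : Tendsto (fun K : ℕ => P K / K) atTop
      (nhds (2 / ∑' j : ℕ, (j : ℝ) * ((j : ℝ) - 1) * π j)) := by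
    simpa only [inv_div] using
      tendsto_div_of_sum_mul_eq (tail_nonneg (tail_nonneg hπ_nonneg hπ) hg)
        (monotone_of_rec hP0 hrec hπ_nonneg hπ hπ0) (sum_tail_tail_mul_eq hP0 hrec) hh
  have hζ_int : ∀ N, Integrable (fun ω => (ζ N ω : ℝ)) :=
    fun N => .of_bound (measurable_from_top.comp (hζ_meas N)).aestronglyMeasurable (c * N)
      (ae_of_all _ fun ω => by simpa using hζ_bdd N ω)
  exact tendsto_integral_comp_div_integral hP hζ_meas hζ_int
    (tendsto_integral_atTop_of_ae_tendsto_atTop hζ_int (fun N => ae_of_all _ fun ω => by simp)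
      (hζ_tendsto.mono fun ω hω => tendsto_natCast_atTop_atTop.comp hω))

theorem stmt12 (π P : ℕ → ℝ)
    (hπ_nonneg : ∀ j, 0 ≤ π j) (hπ_sum : ∑' j, π j = 1) (hπ0 : 0 < π 0)
    (hmean_summable : Summable (fun j : ℕ => (j : ℝ) * π j))
    (hmean : ∑' j : ℕ, (j : ℝ) * π j = 1)
    (hsec_summable : Summable (fun j : ℕ => (j : ℝ) * ((j : ℝ) - 1) * π j))
    (hsec_pos : 0 < ∑' j : ℕ, (j : ℝ) * ((j : ℝ) - 1) * π j)
    (hP0 : P 0 = 1)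
    (hrec : ∀ K, P K = ∑ j ∈ Finset.range (K + 1), π j * P (K - j + 1))
    (Ω : Type*) [MeasureSpace Ω] [IsProbabilityMeasure (ℙ : Measure Ω)]
    (ζ : ℕ → Ω → ℕ) (hζ_meas : ∀ N, Measurable (ζ N))
    (hζ_tendsto : ∀ᵐ ω, Tendsto (fun N => ζ N ω) atTop atTop)
    (c : ℝ) (hζ_bdd : ∀ N ω, (ζ N ω : ℝ) ≤ c * N)
    (hEζ_conv : ∃ L : ℝ, Tendsto (fun N => (∫ ω, (ζ N ω : ℝ)) / N) atTop (nhds L)) :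
    Tendsto (fun N => (∫ ω, P (ζ N ω)) / ∫ ω, (ζ N ω : ℝ)) atTop
      (nhds (2 / ∑' j : ℕ, (j : ℝ) * ((j : ℝ) - 1) * π j)) :=
  stmt12_general π P hπ_nonneg hπ_sum hπ0 hmean_summable hmean hsec_summable hP0 hrec Ω ζ hζ_meas
    hζ_tendsto c hζ_bdd
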